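/- The stabilizer in R = GL_2(F) ⊠ GSp_4(F) of the 2-dimensional totally isotropic subspace span{f_1+f_3, f_2} ⊆ F^6 (for the right action via ι) equals exactly the set {([[a,b],[0,d]], diag(α,a,d,δ)·u) : a, d, α, δ ∈ F^×, b ∈ F, a·d = α·δ, u ∈ U(F)}, where diag(α,a,d,δ) denotes the 4×4 diagonal matrix with diagonal entries α, a, d, δ. -/

import Mathlib

/-!
Statement 4: The stabilizer in R = GL₂(F) ⊠ GSp₄(F) of the 2-dimensional totally
isotropic subspace span{f₁+f₃, f₂} ⊆ F⁶ (for the right action via ι) equals exactly the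
set {([[a,b],[0,d]], diag(α,a,d,δ)·u) : a,d,α,δ ∈ F^×, b ∈ F, a·d = α·δ, u ∈ U(F)},
where U(F) is the group of upper unitriangular matrices in Sp₄(F).
-/

open Matrix

variable (F : Type*) [Field F]

def J4 : Matrix (Fin 4) (Fin 4) F :=
  Matrix.of fun i j => if (i : ℕ) + (j : ℕ) = 3 then (if (i : ℕ) < 2 then 1 else -1) else 0

def J6 : Matrix (Fin 6) (Fin 6) F :=
  Matrix.of fun i j => if (i : ℕ) + (j : ℕ) = 5 then (if (i : ℕ) < 3 then 1 else -1) else 0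

def B6 (v w : Fin 6 → F) : F := v ⬝ᵥ ((J6 F) *ᵥ w)

def IsSp4 (b : Matrix (Fin 4) (Fin 4) F) : Prop := bᵀ * J4 F * b = J4 F

/-- `(g₁, g₂) ∈ R = GL₂(F) ⊠ GSp₄(F)`. -/
def InR (p : Matrix (Fin 2) (Fin 2) F × Matrix (Fin 4) (Fin 4) F) : Prop :=
  p.1.det ≠ 0 ∧ p.2ᵀ * J4 F * p.2 = p.1.det • J4 F

def iota (a : Matrix (Fin 2) (Fin 2) F) (b : Matrix (Fin 4) (Fin 4) F) :
    Matrix (Fin 6) (Fin 6) F :=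
  !![a 0 0, 0, 0, 0, 0, a 0 1;
     0, b 0 0, b 0 1, b 0 2, b 0 3, 0;
     0, b 1 0, b 1 1, b 1 2, b 1 3, 0;
     0, b 2 0, b 2 1, b 2 2, b 2 3, 0;
     0, b 3 0, b 3 1, b 3 2, b 3 3, 0;
     a 1 0, 0, 0, 0, 0, a 1 1]

def f3 : Fin 6 → F := Pi.single (3 : Fin 6) (1 : F)
def f2 : Fin 6 → F := Pi.single (4 : Fin 6) (1 : F)
def f1 : Fin 6 → F := Pi.single (5 : Fin 6) (1 : F)

/-- `span{f₁ + f₃, f₂}` -/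
def repC : Submodule F (Fin 6 → F) := Submodule.span F {f1 F + f3 F, f2 F}

/-- Upper unitriangular matrices in Sp₄(F) (the unipotent radical of the
upper-triangular Borel subgroup of GSp₄(F)). -/
def InU (u : Matrix (Fin 4) (Fin 4) F) : Prop :=
  IsSp4 F u ∧ (∀ i j : Fin 4, j < i → u i j = 0) ∧ (∀ i : Fin 4, u i i = 1)

/-!
`ι(g₁, g₂)` sends `f₁ + f₃` and `f₂` to `(g₁ 1 0, row 2 of g₂, g₁ 1 1)` and `(0, row 3 of g₂, 0)`,
so it maps the plane into itself exactly when `g₁ 1 0 = 0` and rows 2 and 3 of `g₂` are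
`(0, 0, g₁ 1 1, *)` and `(0, 0, 0, *)`. The `(0, 2)` entry of `g₂ᵀ J g₂ = det g₁ • J` then
kills `g₂ 1 0`, so `g₂` is upper triangular, and the entries `(0, 3)` and `(1, 2)` say
`α δ = a d = det g₁` for its diagonal `(α, a, d, δ)`. Dividing `g₂` by its diagonal leaves a
unitriangular symplectic matrix. Conversely such a pair acts triangularly, with invertible
diagonal, on the basis `(f₁ + f₃, f₂)` of the plane.
-/

variable {F}

section

variable {K M : Type*} [Field K] [AddCommGroup M] [Module K M]

lemma span_pair_smul_add_smul_smul (x y : M) {d δ : K} (c : K) (hd : d ≠ 0) (hδ : δ ≠ 0) :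
    Submodule.span K {d • x + c • y, δ • y} = Submodule.span K {x, y} := by
  refine le_antisymm (Submodule.span_le.mpr ?_) (Submodule.span_le.mpr ?_) <;>
    rintro _ (rfl | rfl) <;> rw [SetLike.mem_coe, Submodule.mem_span_pair]
  · exact ⟨d, c, rfl⟩
  · exact ⟨0, δ, by rw [zero_smul, zero_add]⟩
  · refine ⟨d⁻¹, -(d⁻¹ * c * δ⁻¹), ?_⟩
    match_scalars
    · field_simp
    · field_simp
      ring
  · exact ⟨0, δ⁻¹, by rw [zero_smul, zero_add, smul_smul, inv_mul_cancel₀ hδ, one_smul]⟩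

lemma eq_diagonal_diag_mul {n : Type*} [Fintype n] [DecidableEq n] (g : Matrix n n K)
    (h : ∀ i, g i i ≠ 0) :
    g = diagonal (fun i => g i i) * (diagonal (fun i => (g i i)⁻¹) * g) := by
  rw [← Matrix.mul_assoc, diagonal_mul_diagonal]
  simp [mul_inv_cancel₀ (h _)]

end

lemma mem_repC_iff (v : Fin 6 → F) :
    v ∈ repC F ↔ v 0 = 0 ∧ v 1 = 0 ∧ v 2 = 0 ∧ v 5 = v 3 := by
  rw [repC, Submodule.mem_span_pair]
  constructor
  · rintro ⟨x, y, rfl⟩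
    simp [f1, f2, f3]
  · rintro ⟨h0, h1, h2, h5⟩
    refine ⟨v 3, v 4, funext fun k => ?_⟩
    fin_cases k <;> simp [f1, f2, f3, h0, h1, h2, h5]

lemma f1_add_f3_vecMul_iota (g₁ : Matrix (Fin 2) (Fin 2) F) (g₂ : Matrix (Fin 4) (Fin 4) F) :
    (f1 F + f3 F) ᵥ* iota F g₁ g₂ = ![g₁ 1 0, g₂ 2 0, g₂ 2 1, g₂ 2 2, g₂ 2 3, g₁ 1 1] := by
  funext k
  fin_cases k <;> simp [iota, f1, f3, vecMul, dotProduct, Fin.sum_univ_six]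

lemma f2_vecMul_iota (g₁ : Matrix (Fin 2) (Fin 2) F) (g₂ : Matrix (Fin 4) (Fin 4) F) :
    f2 F ᵥ* iota F g₁ g₂ = ![0, g₂ 3 0, g₂ 3 1, g₂ 3 2, g₂ 3 3, 0] := by
  funext k
  fin_cases k <;> simp [iota, f2, vecMul, dotProduct, Fin.sum_univ_six]

lemma map_iota_repC_le_iff (g₁ : Matrix (Fin 2) (Fin 2) F) (g₂ : Matrix (Fin 4) (Fin 4) F) :
    (repC F).map (iota F g₁ g₂).vecMulLinear ≤ repC F ↔
      g₁ 1 0 = 0 ∧ g₂ 2 0 = 0 ∧ g₂ 2 1 = 0 ∧ g₂ 3 0 = 0 ∧ g₂ 3 1 = 0 ∧ g₂ 3 2 = 0 ∧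
        g₁ 1 1 = g₂ 2 2 := by
  rw [repC, Submodule.map_span, Submodule.span_le, Set.image_pair, Set.pair_subset_iff,
    ← repC, SetLike.mem_coe, SetLike.mem_coe, vecMulLinear_apply, vecMulLinear_apply,
    f1_add_f3_vecMul_iota, f2_vecMul_iota, mem_repC_iff, mem_repC_iff]
  simp
  tauto

lemma map_iota_repC_eq_of_le {g₁ : Matrix (Fin 2) (Fin 2) F} {g₂ : Matrix (Fin 4) (Fin 4) F}
    (hle : (repC F).map (iota F g₁ g₂).vecMulLinear ≤ repC F) (hd : g₁ 1 1 ≠ 0)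
    (hδ : g₂ 3 3 ≠ 0) : (repC F).map (iota F g₁ g₂).vecMulLinear = repC F := by
  obtain ⟨h10, h20, h21, h30, h31, h32, h22⟩ := (map_iota_repC_le_iff g₁ g₂).mp hle
  have hv : (f1 F + f3 F) ᵥ* iota F g₁ g₂ = g₁ 1 1 • (f1 F + f3 F) + g₂ 2 3 • f2 F := by
    rw [f1_add_f3_vecMul_iota]
    funext k
    fin_cases k <;> simp [f1, f2, f3, h10, h20, h21, h22]
  have hw : f2 F ᵥ* iota F g₁ g₂ = g₂ 3 3 • f2 F := by
    rw [f2_vecMul_iota]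
    funext k
    fin_cases k <;> simp [f2, h30, h31, h32]
  rw [repC, Submodule.map_span, Set.image_pair, vecMulLinear_apply, vecMulLinear_apply, hv, hw,
    span_pair_smul_add_smul_smul _ _ _ hd hδ]

lemma transpose_mul_J4_mul_apply (g : Matrix (Fin 4) (Fin 4) F) (i j : Fin 4) :
    (gᵀ * J4 F * g) i j =
      g 0 i * g 3 j + g 1 i * g 2 j - g 2 i * g 1 j - g 3 i * g 0 j := by
  simp [Matrix.mul_apply, J4, Fin.sum_univ_four]
  ring

lemma diagonal_mul_J4_mul_diagonal {x : Fin 4 → F} {c : F} (h03 : x 0 * x 3 = c)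
    (h12 : x 1 * x 2 = c) : diagonal x * J4 F * diagonal x = c • J4 F := by
  ext i j
  fin_cases i <;> fin_cases j <;> simp [J4] <;> grind

lemma transpose_diagonal_mul_J4_diagonal_mul {x : Fin 4 → F} {c : F} (h03 : x 0 * x 3 = c)
    (h12 : x 1 * x 2 = c) (g : Matrix (Fin 4) (Fin 4) F) :
    (diagonal x * g)ᵀ * J4 F * (diagonal x * g) = c • (gᵀ * J4 F * g) :=
  calc (diagonal x * g)ᵀ * J4 F * (diagonal x * g)
      = gᵀ * (diagonal x * J4 F * diagonal x) * g := by
        rw [transpose_mul, diagonal_transpose]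
        simp only [Matrix.mul_assoc]
    _ = c • (gᵀ * J4 F * g) := by
        rw [diagonal_mul_J4_mul_diagonal h03 h12, Matrix.mul_smul, Matrix.smul_mul]

lemma mul_diag_eq_of_isUpperTriangular {g : Matrix (Fin 4) (Fin 4) F} {c : F}
    (hg : g.IsUpperTriangular) (hsim : gᵀ * J4 F * g = c • J4 F) :
    g 0 0 * g 3 3 = c ∧ g 1 1 * g 2 2 = c := by
  have h03 := congr($hsim 0 3)
  have h12 := congr($hsim 1 2)
  rw [transpose_mul_J4_mul_apply] at h03 h12
  simp [J4, hg (show (0 : Fin 4) < 1 by decide), hg (show (0 : Fin 4) < 2 by decide),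
    hg (show (0 : Fin 4) < 3 by decide), hg (show (1 : Fin 4) < 2 by decide),
    hg (show (1 : Fin 4) < 3 by decide), hg (show (2 : Fin 4) < 3 by decide)] at h03 h12
  exact ⟨h03, h12⟩

lemma inU_diagonal_inv_mul {g : Matrix (Fin 4) (Fin 4) F} {c : F} (hc : c ≠ 0)
    (hg : g.IsUpperTriangular) (hsim : gᵀ * J4 F * g = c • J4 F) :
    InU F (diagonal (fun i => (g i i)⁻¹) * g) := by
  obtain ⟨h03, h12⟩ := mul_diag_eq_of_isUpperTriangular hg hsim
  refine ⟨?_, fun i j hij => (blockTriangular_diagonal _).mul hg hij, fun i => ?_⟩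
  · rw [IsSp4, transpose_diagonal_mul_J4_diagonal_mul (c := c⁻¹) (by rw [← h03, mul_inv])
      (by rw [← h12, mul_inv]), hsim, smul_smul, inv_mul_cancel₀ hc, one_smul]
  · have hdiag : g i i ≠ 0 := by
      fin_cases i
      exacts [left_ne_zero_of_mul (h03 ▸ hc), left_ne_zero_of_mul (h12 ▸ hc),
        right_ne_zero_of_mul (h12 ▸ hc), right_ne_zero_of_mul (h03 ▸ hc)]
    simp [inv_mul_cancel₀ hdiag]

lemma exists_borel_decomposition_of_map_iota_le {g₁ : Matrix (Fin 2) (Fin 2) F}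
    {g₂ : Matrix (Fin 4) (Fin 4) F} (hR : InR F (g₁, g₂))
    (hle : (repC F).map (iota F g₁ g₂).vecMulLinear ≤ repC F) :
    ∃ (a b d α δ : F) (u : Matrix (Fin 4) (Fin 4) F),
      a ≠ 0 ∧ d ≠ 0 ∧ α ≠ 0 ∧ δ ≠ 0 ∧ a * d = α * δ ∧ InU F u ∧
        (g₁, g₂) = (!![a, b; 0, d], diagonal ![α, a, d, δ] * u) := by
  obtain ⟨hdet, hsim⟩ := hR
  obtain ⟨h10, h20, h21, h30, h31, h32, h22⟩ := (map_iota_repC_le_iff g₁ g₂).mp hle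
  have hdet' : g₁.det = g₁ 0 0 * g₁ 1 1 := by rw [det_fin_two, h10, mul_zero, sub_zero]
  have ha : g₁ 0 0 ≠ 0 := left_ne_zero_of_mul (hdet' ▸ hdet)
  have hd : g₁ 1 1 ≠ 0 := right_ne_zero_of_mul (hdet' ▸ hdet)
  have h10' : g₂ 1 0 = 0 := by
    have h02 := congr($hsim 0 2)
    rw [transpose_mul_J4_mul_apply] at h02
    simpa [J4, h20, h30, h32, ← h22, hd] using h02
  have hg : g₂.IsUpperTriangular := by
    intro i j hij
    fin_cases i <;> fin_cases j <;> first | exact absurd hij (by decide) | assumption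
  obtain ⟨h03, h12⟩ := mul_diag_eq_of_isUpperTriangular hg hsim
  have h11 : g₂ 1 1 = g₁ 0 0 := mul_right_cancel₀ hd (by rw [h22, h12, hdet', h22])
  have hdiag : ![g₂ 0 0, g₁ 0 0, g₁ 1 1, g₂ 3 3] = fun i => g₂ i i := by
    funext i
    fin_cases i <;> simp [h11, h22]
  refine ⟨g₁ 0 0, g₁ 0 1, g₁ 1 1, g₂ 0 0, g₂ 3 3, _, ha, hd,
    left_ne_zero_of_mul (h03 ▸ hdet), right_ne_zero_of_mul (h03 ▸ hdet), (h03.trans hdet').symm,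
    inU_diagonal_inv_mul hdet hg hsim, Prod.ext ?_ ?_⟩
  · ext i j
    fin_cases i <;> fin_cases j <;> simp [h10]
  · rw [hdiag]
    refine eq_diagonal_diag_mul g₂ fun i => ?_
    fin_cases i
    exacts [left_ne_zero_of_mul (h03 ▸ hdet), h11 ▸ ha, h22 ▸ hd,
      right_ne_zero_of_mul (h03 ▸ hdet)]

lemma inR_borel {a b d α δ : F} {u : Matrix (Fin 4) (Fin 4) F} (ha : a ≠ 0) (hd : d ≠ 0)
    (had : a * d = α * δ) (hu : IsSp4 F u) :
    InR F (!![a, b; 0, d], diagonal ![α, a, d, δ] * u) := by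
  refine ⟨by simpa [det_fin_two_of] using mul_ne_zero ha hd, ?_⟩
  rw [transpose_diagonal_mul_J4_diagonal_mul (c := a * d) had.symm rfl, hu, det_fin_two_of]
  simp

lemma map_iota_borel_repC {a b d α δ : F} {u : Matrix (Fin 4) (Fin 4) F} (hd : d ≠ 0)
    (hδ : δ ≠ 0) (hu : u.IsUpperTriangular) (hu1 : ∀ i, u i i = 1) :
    (repC F).map (iota F !![a, b; 0, d] (diagonal ![α, a, d, δ] * u)).vecMulLinear =
      repC F := by
  refine map_iota_repC_eq_of_le ((map_iota_repC_le_iff _ _).mpr ?_) (by simpa using hd)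
    (by simpa [hu1] using hδ)
  simp [hu1, hu (show (0 : Fin 4) < 2 by decide), hu (show (1 : Fin 4) < 2 by decide),
    hu (show (0 : Fin 4) < 3 by decide), hu (show (1 : Fin 4) < 3 by decide),
    hu (show (2 : Fin 4) < 3 by decide)]

theorem statement4 :
    {p : Matrix (Fin 2) (Fin 2) F × Matrix (Fin 4) (Fin 4) F |
        InR F p ∧ Submodule.map (Matrix.vecMulLinear (iota F p.1 p.2)) (repC F) = repC F} =
    {p : Matrix (Fin 2) (Fin 2) F × Matrix (Fin 4) (Fin 4) F |
        ∃ (a b d α δ : F) (u : Matrix (Fin 4) (Fin 4) F),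
          a ≠ 0 ∧ d ≠ 0 ∧ α ≠ 0 ∧ δ ≠ 0 ∧ a * d = α * δ ∧ InU F u ∧
          p = (!![a, b; 0, d], Matrix.diagonal ![α, a, d, δ] * u)} := by
  ext ⟨g₁, g₂⟩
  constructor
  · rintro ⟨hR, hmap⟩
    exact exists_borel_decomposition_of_map_iota_le hR hmap.le
  · rintro ⟨a, b, d, α, δ, u, ha, hd, -, hδ, had, ⟨hsp, htri, hdiag⟩, hp⟩
    rw [hp]
    exact ⟨inR_borel ha hd had hsp, map_iota_borel_repC hd hδ (fun i j hij => htri i j hij) hdiag⟩
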